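/- arXiv:1806.10261 — 5 statements merged into one kernel-verified Lean document; each statement's English description precedes it below -/
import Mathlib

section
/- The functors 𝒫² (covariant power set composed with itself) and 𝒫̄² (contravariant power set composed with itself, which is covariant) from Sets to Sets are not naturally isomorphic. In fact, any natural transformation α : 𝒫̄² → 𝒫² satisfies, for X = {x, y} with x ≠ y, α_X(𝒫(X)) = α_X({∅, {x}, {x,y}}), so no component α_X with |X| ≥ 2 is injective. -/
/-
Naturality along `Empty → X` shows that `α X univ ⊆ {∅}`. Naturality along `c : X → Unit` gives
`P2 c (α X S) = α Unit (Pbar2 c S)`, and `Pbar2 c S = univ` as soon as `S` contains `∅` and `univ`.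
Since double direct image along any map is injective on subsets of `{∅}`, `α X S = α X univ` for
every such `S`; on a two-point set, `{∅, {x}, {x, y}}` is one of them.
-/

/-- Double covariant power set functor action: double direct image. -/
def P2 {X Y : Type} (f : X → Y) (S : Set (Set X)) : Set (Set Y) := Set.image f '' S

/-- Double contravariant power set functor action (covariant): preimage test. -/
def Pbar2 {X Y : Type} (f : X → Y) (S : Set (Set X)) : Set (Set Y) := {B | f ⁻¹' B ∈ S}

open Set

def IsNaturalP2 (α : ∀ X : Type, Set (Set X) → Set (Set X)) : Prop :=
  ∀ (X Y : Type) (f : X → Y) (S : Set (Set X)), α Y (Pbar2 f S) = P2 f (α X S)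

section PowerSet

variable {X Y : Type}

theorem empty_mem_P2_iff (f : X → Y) (S : Set (Set X)) : ∅ ∈ P2 f S ↔ ∅ ∈ S := by
  simp only [P2, mem_image, image_eq_empty, exists_eq_right]

theorem P2_subset_singleton_empty_iff (f : X → Y) (S : Set (Set X)) :
    P2 f S ⊆ {∅} ↔ S ⊆ {∅} := by
  simp only [P2, subset_def, mem_singleton_iff, forall_mem_image, image_eq_empty]

theorem P2_injOn_subsets_singleton_empty (f : X → Y) : InjOn (P2 f) (Iic {∅}) := by
  intro S hS T hT hST
  have hmem : ∅ ∈ S ↔ ∅ ∈ T := by rw [← empty_mem_P2_iff f, hST, empty_mem_P2_iff]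
  rcases subset_singleton_iff_eq.mp hS with rfl | rfl <;>
    rcases subset_singleton_iff_eq.mp hT with rfl | rfl <;> simp_all

theorem P2_subset_singleton_empty_of_isEmpty [IsEmpty X] (f : X → Y) (S : Set (Set X)) :
    P2 f S ⊆ {∅} :=
  (P2_subset_singleton_empty_iff f S).mpr fun A _ => A.eq_empty_of_isEmpty

theorem Pbar2_univ (f : X → Y) : Pbar2 f (univ : Set (Set X)) = univ :=
  eq_univ_of_forall fun _ => mem_univ _

theorem Pbar2_eq_univ_of_subsingleton [Subsingleton Y] (f : X → Y) {S : Set (Set X)}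
    (h₀ : ∅ ∈ S) (h₁ : univ ∈ S) : Pbar2 f S = univ := by
  refine eq_univ_of_forall fun B => ?_
  rcases B.eq_empty_or_nonempty with rfl | hB
  · exact h₀
  · rw [hB.eq_univ]
    exact h₁

end PowerSet

namespace IsNaturalP2

variable {α : ∀ X : Type, Set (Set X) → Set (Set X)} (hα : IsNaturalP2 α)
include hα

theorem apply_univ_subset (X : Type) : α X univ ⊆ {∅} := by
  rw [← Pbar2_univ (Empty.elim : Empty → X), hα]
  exact P2_subset_singleton_empty_of_isEmpty _ _

theorem apply_eq_apply_univ {X : Type} {S : Set (Set X)} (h₀ : ∅ ∈ S) (h₁ : univ ∈ S) :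
    α X S = α X univ := by
  let c : X → Unit := fun _ => ()
  have hP2 : P2 c (α X S) = P2 c (α X univ) := by
    rw [← hα, ← hα, Pbar2_eq_univ_of_subsingleton c h₀ h₁, Pbar2_univ]
  have hS : α X S ⊆ {∅} := by
    rw [← P2_subset_singleton_empty_iff c, hP2, P2_subset_singleton_empty_iff]
    exact hα.apply_univ_subset X
  exact P2_injOn_subsets_singleton_empty c hS (hα.apply_univ_subset X) hP2

theorem not_injective (X : Type) [Nontrivial X] : ¬ Function.Injective (α X) := by
  intro hinj
  obtain ⟨x, y, hxy⟩ := exists_pair_ne X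
  have hpair : ({∅, univ} : Set (Set X)) = univ :=
    hinj (hα.apply_eq_apply_univ (by simp) (by simp))
  have hx : ({x} : Set X) ∈ ({∅, univ} : Set (Set X)) := hpair ▸ mem_univ _
  rcases hx with h | h
  · exact singleton_ne_empty x h
  · exact hxy ((h ▸ mem_univ y : y ∈ ({x} : Set X))).symm

end IsNaturalP2

theorem no_natural_iso
    (α : ∀ X : Type, Set (Set X) → Set (Set X))
    (hnat : ∀ (X Y : Type) (f : X → Y) (S : Set (Set X)),
      α Y (Pbar2 f S) = P2 f (α X S))
    (X : Type) (x y : X) (hxy : x ≠ y) (hcov : ∀ z : X, z = x ∨ z = y) :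
    α X Set.univ = α X {∅, {x}, {x, y}} ∧ ¬ Function.Injective (α X) := by
  have hα : IsNaturalP2 α := hnat
  have hpair : ({x, y} : Set X) = univ := eq_univ_of_forall fun z => hcov z
  have : Nontrivial X := ⟨⟨x, y, hxy⟩⟩
  refine ⟨(hα.apply_eq_apply_univ (by simp) ?_).symm, hα.not_injective X⟩
  rw [← hpair]
  simp
end

section
/- The BDD interpretation β is a natural transformation from the diagram functor 𝒟 to 𝒫̄²: for every map f : X → Y and every diagram F over X, β_Y(𝒟(f)(F)) = 𝒫̄²(f)(β_X(F)). -/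
/-- Diagrams over X: 0-terminal, 1-terminal, and decision nodes. -/
inductive Diagram (X : Type) where
  | zero : Diagram X
  | one : Diagram X
  | node (a : X) (F G : Diagram X) : Diagram X

/-- Relabeling of diagrams (the action of 𝒟 on maps). -/
def Dmap {X Y : Type} (f : X → Y) : Diagram X → Diagram Y
  | .zero => .zero
  | .one => .one
  | .node a F G => .node (f a) (Dmap f F) (Dmap f G)

/-- BDD semantics β_X : 𝒟(X) → 𝒫²(X). -/
def bdd {X : Type} : Diagram X → Set (Set X)
  | .zero => ∅
  | .one => Set.univ
  | .node a F G => {C ∈ bdd F | a ∉ C} ∪ {C ∈ bdd G | a ∈ C}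

theorem bdd_natural {X Y : Type} (f : X → Y) (F : Diagram X) :
    bdd (Dmap f F) = Pbar2 f (bdd F) := by
  induction F with
  | zero => ext B; simp [Dmap, bdd, Pbar2]
  | one => ext B; simp [Dmap, bdd, Pbar2]
  | node a F G ihF ihG =>
    ext B
    simp only [Dmap, bdd, Set.mem_union, Set.mem_sep_iff, ihF, ihG, Pbar2,
      Set.mem_setOf_eq, Set.mem_preimage]
end

section
/- The ZDD interpretation ζ is a natural transformation from the diagram functor 𝒟 to 𝒫²: for every map f : X → Y and every diagram F over X, ζ_Y(𝒟(f)(F)) = 𝒫²(f)(ζ_X(F)). -/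
/-- ZDD semantics ζ_X : 𝒟(X) → 𝒫²(X). -/
def zdd {X : Type} : Diagram X → Set (Set X)
  | .zero => ∅
  | .one => {∅}
  | .node a F G => zdd F ∪ ((fun A => A ∪ {a}) '' zdd G)

theorem zdd_natural {X Y : Type} (f : X → Y) (F : Diagram X) :
    zdd (Dmap f F) = P2 f (zdd F) := by
  induction F with
  | zero => simp [Dmap, zdd, P2]
  | one => simp [Dmap, zdd, P2]
  | node a F G ihF ihG =>
    simp only [Dmap, zdd, P2, Set.image_union, ihF, ihG]
    congr 1
    ext B
    simp only [Set.mem_image, P2]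
    constructor
    · rintro ⟨C, ⟨A, hA, rfl⟩, rfl⟩
      exact ⟨A ∪ {a}, ⟨A, hA, rfl⟩, by simp [Set.image_insert_eq]⟩
    · rintro ⟨C, ⟨A, hA, rfl⟩, rfl⟩
      exact ⟨f '' A, ⟨A, hA, rfl⟩, by simp [Set.image_insert_eq]⟩
end

section
/- β is not a natural transformation from 𝒟 to 𝒫²: with X = {a,b}, Y = {a,b,c}, the inclusion i : X → Y, and the diagram F = (a, (b, 𝟎, 𝟏), 𝟏), one has β_Y(𝒟(i)(F)) ≠ 𝒫²(i)(β_X(F)). -/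
/-- The inclusion of {a,b} into {a,b,c}, modeled as Fin 2 ↪ Fin 3. -/
def incl : Fin 2 → Fin 3 := fun x => ⟨x.val, by omega⟩

/-- The diagram (a, (b, 𝟎, 𝟏), 𝟏) with a = 0, b = 1. -/
def exDiagram : Diagram (Fin 2) := .node 0 (.node 1 .zero .one) .one

theorem bdd_not_natural_for_P2 :
    bdd (Dmap incl exDiagram) ≠ P2 incl (bdd exDiagram) := by
  intro h
  have hmem : ({0, 2} : Set (Fin 3)) ∈ bdd (Dmap incl exDiagram) := by
    simp [bdd, Dmap, exDiagram]; right; left; decide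
  rw [h] at hmem
  obtain ⟨A, -, hA⟩ := hmem
  have h2 : (2 : Fin 3) ∈ incl '' A := by rw [hA]; simp
  obtain ⟨x, -, hx⟩ := h2
  fin_cases x <;> simp [incl] at hx
end

section
/- ζ is not a natural transformation from 𝒟 to 𝒫̄²: with X = {a,b}, Y = {a,b,c}, the inclusion i : X → Y, and the diagram F = (a, (b, 𝟎, 𝟏), 𝟏), one has ζ_Y(𝒟(i)(F)) ≠ 𝒫̄²(i)(ζ_X(F)). -/
theorem zdd_not_natural_for_Pbar2 :
    zdd (Dmap incl exDiagram) ≠ Pbar2 incl (zdd exDiagram) := by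
  intro h
  have hB : ({0, 2} : Set (Fin 3)) ∈ Pbar2 incl (zdd exDiagram) := by
    simp only [Pbar2, zdd, exDiagram, Set.mem_setOf_eq, Set.mem_union, Set.mem_image]
    right
    refine ⟨∅, rfl, ?_⟩
    ext x
    fin_cases x <;> simp [incl, Set.mem_preimage]
  rw [← h] at hB
  simp only [zdd, Dmap, exDiagram, Set.mem_union, Set.mem_image, Set.mem_singleton_iff,
    Set.mem_empty_iff_false, false_or, Set.union_empty, Set.empty_union] at hB
  rcases hB with ⟨A, hA, h2⟩ | ⟨A, hA, h2⟩ <;> subst hA <;>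
    · have := congrArg (fun s => (2 : Fin 3) ∈ s) h2
      simp [incl] at this
end
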